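/- Let E be the infinite EES consisting of one isolated event labelled a together with countably many disjoint two-event chains a < b; and let F be the infinite EES consisting of countably many disjoint two-event chains a < b. Then E and F are pomset trace equivalent but not interleaving bisimilar. -/

import Mathlib

/-- A labelled prime event structure over alphabet `A`. -/
structure PES (A : Type*) where
  E : Type*
  le : E → E → Prop
  conflict : E → E → Prop
  lab : E → A
  le_refl : ∀ e, le e e
  le_trans : ∀ e e' e'', le e e' → le e' e'' → le e e''
  le_antisymm : ∀ e e', le e e' → le e' e → e = e'
  finite_past : ∀ e, Set.Finite {e' | le e' e ∧ e' ≠ e}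
  conflict_irrefl : ∀ e, ¬ conflict e e
  conflict_symm : ∀ e e', conflict e e' → conflict e' e
  conflict_inherit : ∀ e e' e'', le e e' → e ≠ e' → conflict e e'' → conflict e' e''

namespace PES

variable {A : Type*}

/-- A coherence space: a PES with empty (strict) causality. -/
def IsCS (P : PES A) : Prop := ∀ e e', P.le e e' → e = e'

/-- An elementary event structure: a PES with empty conflict. -/
def IsEES (P : PES A) : Prop := ∀ e e', ¬ P.conflict e e'

/-- Concurrency. -/
def co (P : PES A) (e e' : P.E) : Prop :=
  ¬ P.le e e' ∧ ¬ P.le e' e ∧ ¬ P.conflict e e'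

/-- Configurations: finite, conflict-free, downward-closed sets of events. -/
def Config (P : PES A) (X : Set P.E) : Prop :=
  X.Finite ∧ (∀ e ∈ X, ∀ e' ∈ X, ¬ P.conflict e e') ∧
    (∀ e ∈ X, ∀ e', P.le e' e → e' ∈ X)

/-- Single-event labelled transition between configurations. -/
def Trans (P : PES A) (X : Set P.E) (a : A) (X' : Set P.E) : Prop :=
  P.Config X ∧ P.Config X' ∧ ∃ e, e ∉ X ∧ X' = insert e X ∧ P.lab e = a

/-- `X` can perform the sequential trace `w`. -/
def TraceFrom (P : PES A) : Set P.E → List A → Prop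
  | X, [] => P.Config X
  | X, a :: w => ∃ X', P.Trans X a X' ∧ P.TraceFrom X' w

/-- Sequential traces of a PES. -/
def STr (P : PES A) (w : List A) : Prop := P.TraceFrom ∅ w

/-- Interleaving trace equivalence. -/
def ITrEq (P Q : PES A) : Prop := ∀ w : List A, P.STr w ↔ Q.STr w

/-- Interleaving bisimulation. -/
def IBisim (P Q : PES A) (R : Set P.E → Set Q.E → Prop) : Prop :=
  R ∅ ∅ ∧ ∀ X Y, R X Y →
    (∀ a X', P.Trans X a X' → ∃ Y', Q.Trans Y a Y' ∧ R X' Y') ∧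
    (∀ a Y', Q.Trans Y a Y' → ∃ X', P.Trans X a X' ∧ R X' Y')

/-- Interleaving bisimilarity. -/
def IBisimilar (P Q : PES A) : Prop := ∃ R, IBisim P Q R

/-- Step transition, labelled by the multiset of labels of a nonempty set of
pairwise concurrent events added at once. -/
def StepTrans (P : PES A) (X : Set P.E) (m : Multiset A) (X' : Set P.E) : Prop :=
  P.Config X ∧ P.Config X' ∧ X ⊆ X' ∧ ∃ G : Finset P.E, ↑G = X' \ X ∧ G.Nonempty ∧
    (∀ e ∈ G, ∀ e' ∈ G, e ≠ e' → P.co e e') ∧ Multiset.map P.lab G.val = m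

/-- `X` can perform the step trace `s`. -/
def StepTraceFrom (P : PES A) : Set P.E → List (Multiset A) → Prop
  | X, [] => P.Config X
  | X, m :: s => ∃ X', P.StepTrans X m X' ∧ P.StepTraceFrom X' s

/-- Step traces of a PES. -/
def StTr (P : PES A) (s : List (Multiset A)) : Prop := P.StepTraceFrom ∅ s

/-- Step trace equivalence. -/
def STrEq (P Q : PES A) : Prop := ∀ s : List (Multiset A), P.StTr s ↔ Q.StTr s

/-- Step bisimulation. -/
def SBisim (P Q : PES A) (R : Set P.E → Set Q.E → Prop) : Prop :=
  R ∅ ∅ ∧ ∀ X Y, R X Y →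
    (∀ m X', P.StepTrans X m X' → ∃ Y', Q.StepTrans Y m Y' ∧ R X' Y') ∧
    (∀ m Y', Q.StepTrans Y m Y' → ∃ X', P.StepTrans X m X' ∧ R X' Y')

/-- Step bisimilarity. -/
def SBisimilar (P Q : PES A) : Prop := ∃ R, SBisim P Q R

/-- `f` restricts to a label-preserving order-isomorphism from `X` onto `Y`. -/
def IsoOn (P Q : PES A) (f : P.E → Q.E) (X : Set P.E) (Y : Set Q.E) : Prop :=
  Set.BijOn f X Y ∧ (∀ e ∈ X, ∀ e' ∈ X, (P.le e e' ↔ Q.le (f e) (f e'))) ∧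
    ∀ e ∈ X, Q.lab (f e) = P.lab e

/-- The labelled posets induced by `X` and `Y` are isomorphic (same pomset). -/
def PIso (P Q : PES A) (X : Set P.E) (Y : Set Q.E) : Prop :=
  ∃ f, IsoOn P Q f X Y

/-- Pomset trace equivalence: same sets of pomsets of configurations. -/
def PTrEq (P Q : PES A) : Prop :=
  (∀ X, P.Config X → ∃ Y, Q.Config Y ∧ PIso P Q X Y) ∧
  (∀ Y, Q.Config Y → ∃ X, P.Config X ∧ PIso P Q X Y)

/-- Pomset transition: strictly extending a configuration. -/
def PomTrans (P : PES A) (X X' : Set P.E) : Prop :=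
  P.Config X ∧ P.Config X' ∧ X ⊂ X'

/-- Pomset bisimulation: matched extensions must add isomorphic pomsets. -/
def PBisim (P Q : PES A) (R : Set P.E → Set Q.E → Prop) : Prop :=
  R ∅ ∅ ∧ ∀ X Y, R X Y →
    (∀ X', P.PomTrans X X' →
      ∃ Y', Q.PomTrans Y Y' ∧ PIso P Q (X' \ X) (Y' \ Y) ∧ R X' Y') ∧
    (∀ Y', Q.PomTrans Y Y' →
      ∃ X', P.PomTrans X X' ∧ PIso P Q (X' \ X) (Y' \ Y) ∧ R X' Y')

/-- Pomset bisimilarity. -/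
def PBisimilar (P Q : PES A) : Prop := ∃ R, PBisim P Q R

/-- Weak history preserving bisimulation. -/
def WHBisim (P Q : PES A) (R : Set P.E → Set Q.E → Prop) : Prop :=
  R ∅ ∅ ∧ ∀ X Y, R X Y → PIso P Q X Y ∧
    (∀ a X', P.Trans X a X' → ∃ Y', Q.Trans Y a Y' ∧ R X' Y') ∧
    (∀ a Y', Q.Trans Y a Y' → ∃ X', P.Trans X a X' ∧ R X' Y')

/-- Weak history preserving bisimilarity. -/
def WHBisimilar (P Q : PES A) : Prop := ∃ R, WHBisim P Q R

/-- History preserving bisimulation: triples `(X, Y, f)`. -/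
def HBisim (P Q : PES A) (R : Set P.E → Set Q.E → (P.E → Q.E) → Prop) : Prop :=
  (∃ f, R ∅ ∅ f) ∧ ∀ X Y f, R X Y f → IsoOn P Q f X Y ∧
    (∀ a X', P.Trans X a X' →
      ∃ Y' f', Q.Trans Y a Y' ∧ R X' Y' f' ∧ ∀ e ∈ X, f' e = f e) ∧
    (∀ a Y', Q.Trans Y a Y' →
      ∃ X' f', P.Trans X a X' ∧ R X' Y' f' ∧ ∀ e ∈ X, f' e = f e)

/-- History preserving bisimilarity. -/
def HBisimilar (P Q : PES A) : Prop := ∃ R, HBisim P Q R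

/-- Closure under backward transitions, as needed for hereditary hp-bisimulations. -/
def Hereditary (P Q : PES A) (R : Set P.E → Set Q.E → (P.E → Q.E) → Prop) : Prop :=
  ∀ X Y f, R X Y f →
    (∀ a X', P.Trans X' a X → R X' (f '' X') f) ∧
    (∀ a Y', Q.Trans Y' a Y → R {e ∈ X | f e ∈ Y'} Y' f)

/-- Hereditary history preserving bisimilarity. -/
def HHBisimilar (P Q : PES A) : Prop := ∃ R, HBisim P Q R ∧ Hereditary P Q R

/-- Isomorphism of PESs. -/
def Iso (P Q : PES A) : Prop :=
  ∃ f : P.E ≃ Q.E, (∀ e e', P.le e e' ↔ Q.le (f e) (f e')) ∧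
    (∀ e e', P.conflict e e' ↔ Q.conflict (f e) (f e')) ∧
    ∀ e, Q.lab (f e) = P.lab e

end PES


/-- One isolated `a` together with countably many disjoint chains `a < b`
(`a := false`, `b := true`). -/
def eesIsoPlus : PES Bool where
  E := Unit ⊕ (ℕ × Bool)
  le x y := x = y ∨ (∃ n, x = Sum.inr (n, false) ∧ y = Sum.inr (n, true))
  conflict _ _ := False
  lab x := match x with | Sum.inl _ => false | Sum.inr (_, c) => c
  le_refl _ := Or.inl rfl
  le_trans := by
    rintro x y z (rfl | ⟨n, rfl, rfl⟩) h'
    · exact h'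
    · rcases h' with rfl | ⟨m, hm, rfl⟩
      · exact Or.inr ⟨n, rfl, rfl⟩
      · simp at hm
  le_antisymm := by
    rintro x y (rfl | ⟨n, rfl, rfl⟩) h'
    · rfl
    · rcases h' with h' | ⟨m, hm1, hm2⟩ <;> simp_all
  finite_past e := by
    apply Set.Subsingleton.finite
    rintro x ⟨(rfl | ⟨m, rfl, rfl⟩), hx⟩
    · exact absurd rfl hx
    · rintro y ⟨(rfl | ⟨k, rfl, hk⟩), hy⟩
      · exact absurd rfl hy
      · simp only [Sum.inr.injEq, Prod.mk.injEq] at hk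
        simp [hk.1]
  conflict_irrefl _ h := h
  conflict_symm _ _ h := h
  conflict_inherit _ _ _ _ _ h := h

/-- Countably many disjoint chains `a < b` (`a := false`, `b := true`). -/
def eesChains : PES Bool where
  E := ℕ × Bool
  le x y := x = y ∨ (x.2 = false ∧ y.2 = true ∧ x.1 = y.1)
  conflict _ _ := False
  lab x := x.2
  le_refl _ := Or.inl rfl
  le_trans := by
    rintro x y z (rfl | ⟨h1, h2, h3⟩) h'
    · exact h'
    · rcases h' with rfl | ⟨h4, h5, h6⟩
      · exact Or.inr ⟨h1, h2, h3⟩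
      · simp_all
  le_antisymm := by
    rintro x y (rfl | ⟨h1, h2, h3⟩) h'
    · rfl
    · rcases h' with rfl | ⟨h4, h5, h6⟩
      · rfl
      · simp_all
  finite_past e := by
    apply Set.Subsingleton.finite
    rintro x ⟨(rfl | ⟨h1, h2, h3⟩), hx⟩
    · exact absurd rfl hx
    · rintro y ⟨(rfl | ⟨h4, h5, h6⟩), hy⟩
      · exact absurd rfl hy
      · exact Prod.ext (h3.trans h6.symm) (h1.trans h4.symm)
  conflict_irrefl _ h := h
  conflict_symm _ _ h := h
  conflict_inherit _ _ _ _ _ h := h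

/-!
Each of `E = eesIsoPlus` and `F = eesChains` embeds into the other onto a downward-closed part,
preserving and reflecting causality and labels: `F` sits inside `E` as its chains, and `E` sits
inside `F` by shifting the chains by one and sending the isolated `a` to the `a` of the first
chain. Such an embedding maps configurations to configurations carrying the same pomset, which
gives pomset trace equivalence. Interleaving bisimilarity fails because `E` can fire its isolated
`a`; `F` must answer with the `a` of some chain, and then fires the `b` of that chain, which `E`
cannot match.
-/

namespace PES

variable {A : Type*} {P Q : PES A}

theorem config_empty (P : PES A) : P.Config ∅ :=
  ⟨Set.finite_empty, by simp, by simp⟩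

theorem Config.insert {X : Set P.E} {e : P.E} (hX : P.Config X)
    (hpast : ∀ e', P.le e' e → e' ≠ e → e' ∈ X) (hconf : ∀ e' ∈ X, ¬ P.conflict e e') :
    P.Config (insert e X) := by
  obtain ⟨hfin, hcf, hdown⟩ := hX
  refine ⟨hfin.insert e, ?_, ?_⟩
  · rintro e₁ (rfl | h₁) e₂ (rfl | h₂)
    · exact P.conflict_irrefl _
    · exact hconf e₂ h₂
    · exact fun h => hconf e₁ h₁ (P.conflict_symm _ _ h)
    · exact hcf e₁ h₁ e₂ h₂
  · rintro e₁ (rfl | h₁) e₂ hle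
    · exact (em _).imp id (hpast e₂ hle)
    · exact .inr (hdown e₁ h₁ e₂ hle)

theorem trans_insert {X : Set P.E} {e : P.E} (hX : P.Config X) (he : e ∉ X)
    (hpast : ∀ e', P.le e' e → e' ≠ e → e' ∈ X) (hconf : ∀ e' ∈ X, ¬ P.conflict e e') :
    P.Trans X (P.lab e) (insert e X) :=
  ⟨hX, hX.insert hpast hconf, e, he, rfl, rfl⟩

theorem not_iBisimilar_of_trans {a b : A} {X : Set P.E} (hX : P.Trans ∅ a X)
    (hXb : ∀ X', ¬ P.Trans X b X') (hQ : ∀ Y, Q.Trans ∅ a Y → ∃ Y', Q.Trans Y b Y') :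
    ¬ P.IBisimilar Q := by
  rintro ⟨R, hR₀, hR⟩
  obtain ⟨Y, hY, hXY⟩ := (hR ∅ ∅ hR₀).1 a X hX
  obtain ⟨Y', hY'⟩ := hQ Y hY
  obtain ⟨X', hX', -⟩ := (hR X Y hXY).2 b Y' hY'
  exact hXb X' hX'

theorem PIso.symm [Nonempty P.E] {X : Set P.E} {Y : Set Q.E} (h : PIso P Q X Y) :
    PIso Q P Y X := by
  obtain ⟨f, hbij, hle, hlab⟩ := h
  have hinv := hbij.invOn_invFunOn
  have hbij' := hbij.symm hinv.symm
  refine ⟨Function.invFunOn f X, hbij', fun q hq q' hq' => ?_, fun q hq => ?_⟩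
  · rw [hle _ (hbij'.mapsTo hq) _ (hbij'.mapsTo hq'), hinv.2 hq, hinv.2 hq']
  · rw [← hlab _ (hbij'.mapsTo hq), hinv.2 hq]

structure PrefixEmbedding (P Q : PES A) where
  toFun : P.E → Q.E
  le_iff : ∀ e e', Q.le (toFun e) (toFun e') ↔ P.le e e'
  conflict_of : ∀ e e', Q.conflict (toFun e) (toFun e') → P.conflict e e'
  lab_eq : ∀ e, Q.lab (toFun e) = P.lab e
  exists_eq_of_le : ∀ e q, Q.le q (toFun e) → ∃ e', toFun e' = q

namespace PrefixEmbedding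

variable (f : PrefixEmbedding P Q)

theorem injective : Function.Injective f.toFun := fun e e' h =>
  P.le_antisymm e e' ((f.le_iff e e').1 (h ▸ Q.le_refl _))
    ((f.le_iff e' e).1 (h ▸ Q.le_refl _))

theorem config_image {X : Set P.E} (hX : P.Config X) : Q.Config (f.toFun '' X) := by
  obtain ⟨hfin, hcf, hdown⟩ := hX
  refine ⟨hfin.image _, ?_, ?_⟩
  · rintro _ ⟨e, he, rfl⟩ _ ⟨e', he', rfl⟩ h
    exact hcf e he e' he' (f.conflict_of e e' h)
  · rintro _ ⟨e, he, rfl⟩ q hq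
    obtain ⟨e', rfl⟩ := f.exists_eq_of_le e q hq
    exact ⟨e', hdown e he e' ((f.le_iff e' e).1 hq), rfl⟩

theorem pIso_image (X : Set P.E) : PIso P Q X (f.toFun '' X) :=
  ⟨f.toFun, f.injective.injOn.bijOn_image, fun e _ e' _ => (f.le_iff e e').symm,
    fun e _ => f.lab_eq e⟩

end PrefixEmbedding

theorem pTrEq_of_prefixEmbedding [Nonempty Q.E] (f : PrefixEmbedding P Q)
    (g : PrefixEmbedding Q P) : PTrEq P Q :=
  ⟨fun X hX => ⟨f.toFun '' X, f.config_image hX, f.pIso_image X⟩,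
    fun Y hY => ⟨g.toFun '' Y, g.config_image hY, (g.pIso_image Y).symm⟩⟩

end PES

theorem eesChains_le_iff {p q : ℕ × Bool} :
    eesChains.le p q ↔ p = q ∨ p.2 = false ∧ q.2 = true ∧ p.1 = q.1 :=
  Iff.rfl

theorem eesIsoPlus_le_iff {x y : Unit ⊕ ℕ × Bool} :
    eesIsoPlus.le x y ↔ x = y ∨ ∃ n, x = Sum.inr (n, false) ∧ y = Sum.inr (n, true) :=
  Iff.rfl

theorem eesIsoPlus_le_inl_iff {x : Unit ⊕ ℕ × Bool} :
    eesIsoPlus.le x (Sum.inl ()) ↔ x = Sum.inl () := by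
  simp [eesIsoPlus_le_iff]

theorem eesIsoPlus_inr_le_inr_iff {p q : ℕ × Bool} :
    eesIsoPlus.le (Sum.inr p) (Sum.inr q) ↔ eesChains.le p q := by
  simp only [eesChains_le_iff, eesIsoPlus_le_iff]
  aesop

theorem eesIsoPlus_exists_inr_of_le_inr {x : Unit ⊕ ℕ × Bool} {p : ℕ × Bool}
    (h : eesIsoPlus.le x (Sum.inr p)) : ∃ q, Sum.inr q = x := by
  rcases x with ⟨⟩ | q
  · simp [eesIsoPlus_le_iff] at h
  · exact ⟨q, rfl⟩

def eesChainsPrefixIsoPlus : PES.PrefixEmbedding eesChains eesIsoPlus where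
  toFun := (Sum.inr : ℕ × Bool → Unit ⊕ ℕ × Bool)
  le_iff _ _ := eesIsoPlus_inr_le_inr_iff
  conflict_of _ _ h := h
  lab_eq _ := rfl
  exists_eq_of_le _ _ := eesIsoPlus_exists_inr_of_le_inr

/-- Chain `n` goes to chain `n + 1` and the isolated `a` to the `a` of chain `0`; the `b` of
chain `0` lies above nothing else, so the image is downward closed. -/
def eesIsoPlusToChains : Unit ⊕ ℕ × Bool → ℕ × Bool :=
  Sum.elim (fun _ => (0, false)) fun p => (p.1 + 1, p.2)

theorem eesChains_le_eesIsoPlusToChains_iff {x y : Unit ⊕ ℕ × Bool} :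
    eesChains.le (eesIsoPlusToChains x) (eesIsoPlusToChains y) ↔ eesIsoPlus.le x y := by
  rcases x with ⟨⟩ | ⟨m, c⟩ <;> rcases y with ⟨⟩ | ⟨n, d⟩ <;>
    simp [eesIsoPlusToChains, eesChains_le_iff, eesIsoPlus_le_iff]
  tauto

theorem eesChains_exists_eesIsoPlusToChains_of_le {x : Unit ⊕ ℕ × Bool} {q : ℕ × Bool}
    (h : eesChains.le q (eesIsoPlusToChains x)) : ∃ y, eesIsoPlusToChains y = q := by
  rcases x with ⟨⟩ | ⟨n, c⟩ <;>
    simp only [eesIsoPlusToChains, Sum.elim_inl, Sum.elim_inr, eesChains_le_iff] at h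
  · rcases h with rfl | ⟨-, h, -⟩
    · exact ⟨Sum.inl (), rfl⟩
    · cases h
  · rcases h with rfl | ⟨h2, -, h1⟩
    · exact ⟨Sum.inr (n, c), rfl⟩
    · exact ⟨Sum.inr (n, false), Prod.ext h1.symm h2.symm⟩

def eesIsoPlusPrefixChains : PES.PrefixEmbedding eesIsoPlus eesChains where
  toFun := eesIsoPlusToChains
  le_iff _ _ := eesChains_le_eesIsoPlusToChains_iff
  conflict_of _ _ h := h
  lab_eq x := by rcases x with ⟨⟩ | p <;> rfl
  exists_eq_of_le _ _ := eesChains_exists_eesIsoPlusToChains_of_le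

instance : Nonempty eesChains.E := ⟨((0 : ℕ), false)⟩

theorem eesIsoPlus_trans_isolated : eesIsoPlus.Trans ∅ false (insert (Sum.inl ()) ∅) :=
  PES.trans_insert eesIsoPlus.config_empty (Set.notMem_empty _)
    (fun _ h hne => absurd (eesIsoPlus_le_inl_iff.1 h) hne) fun _ _ h => h

theorem eesIsoPlus_not_trans_true_of_isolated (X : Set eesIsoPlus.E) :
    ¬ eesIsoPlus.Trans (insert (Sum.inl ()) ∅) true X := by
  rintro ⟨-, ⟨-, -, hdown⟩, e, -, rfl, hlab⟩
  rcases e with ⟨⟩ | ⟨m, c⟩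
  · cases hlab
  obtain rfl : c = true := hlab
  rcases hdown _ (Set.mem_insert _ _) (Sum.inr (m, false))
    (eesIsoPlus_le_iff.2 (.inr ⟨m, rfl, rfl⟩)) with h | h | h
  · cases h
  · cases h
  · exact Set.notMem_empty _ h

theorem eesChains_exists_trans_true_of_trans_false (Y : Set eesChains.E)
    (hY : eesChains.Trans ∅ false Y) : ∃ Y', eesChains.Trans Y true Y' := by
  obtain ⟨-, hY, ⟨n, c⟩, -, rfl, hlab⟩ := hY
  obtain rfl : c = false := hlab
  refine ⟨insert (n, true) (insert (n, false) ∅), PES.trans_insert hY ?_ ?_ fun _ _ h => h⟩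
  · rintro (h | h)
    · cases h
    · exact Set.notMem_empty _ h
  · intro e h hne
    rcases eesChains_le_iff.1 h with rfl | ⟨h2, -, h1⟩
    · exact absurd rfl hne
    · exact .inl (Prod.ext h1 h2)

theorem infinite_ees_pt_not_ib :
    PES.PTrEq eesIsoPlus eesChains ∧ ¬ PES.IBisimilar eesIsoPlus eesChains :=
  ⟨PES.pTrEq_of_prefixEmbedding eesIsoPlusPrefixChains eesChainsPrefixIsoPlus,
    PES.not_iBisimilar_of_trans eesIsoPlus_trans_isolated eesIsoPlus_not_trans_true_of_isolated
      eesChains_exists_trans_true_of_trans_false⟩
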